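/- For every stationary distribution ψ ∈ M_s(A^{s+1}) and every integer l ≥ 1, min over ν ∈ E(l,n,s+1) of the ℓ¹-distance ‖ψ − ν‖₁ is at most 2(s+3) n^{s+1} / l; consequently every stationary distribution on A^{s+1} is the limit in total variation of a sequence of empirical measures ν_l ∈ E(l,n,s+1). -/

import Mathlib

open Finset Filter

/-- Probability distribution on a finite type. -/
def IsProbF {α : Type*} [Fintype α] (p : α → ℝ) : Prop := (∀ a, 0 ≤ p a) ∧ ∑ a, p a = 1

/-- Reduction of a distribution on `A^{k+1}` to `A^k` (sum over the last coordinate). -/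
def reduce {n k : ℕ} (ν : (Fin (k+1) → Fin n) → ℝ) : (Fin k → Fin n) → ℝ :=
  fun i => ∑ j, ν (Fin.snoc i j)

/-- Stationarity (consistency) of a distribution on `A^{k+1}`. -/
def IsStatT {n : ℕ} : (k : ℕ) → ((Fin (k+1) → Fin n) → ℝ) → Prop
  | 0, _ => True
  | k+1, ν => (∀ i : Fin (k+1) → Fin n, ∑ j, ν (Fin.snoc i j) = ∑ j, ν (Fin.cons j i)) ∧
      IsStatT k (reduce ν)

open Fin.NatCast in
/-- Cyclic empirical `(s+1)`-tuple measure of a sample path of length `l`. -/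
noncomputable def empT {n : ℕ} (s : ℕ) {l : ℕ} [NeZero l] (x : Fin l → Fin n) :
    (Fin (s+1) → Fin n) → ℝ :=
  fun i => (∑ t : Fin l,
    if (fun r : Fin (s+1) => x (t + (r.val : Fin l))) = i then (1:ℝ) else 0) / l

open scoped Classical in
/-- `E(l,n,s+1)` with `l = m+1`. -/
noncomputable def Eset (n s m : ℕ) : Finset ((Fin (s+1) → Fin n) → ℝ) :=
  Finset.image (fun x : Fin (m+1) → Fin n => empT s x) Finset.univ

/-!
Round `l' ψ` down to integer weights on the edges `A^{s+1}` of the de Bruijn graph on `A^s`, where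
`l' = l - (s+1) n^{s+1}`. Stationarity says that `ψ` is a balanced flow, so the rounded weights are
out of balance by at most `n` at each vertex; routing every imbalance through a hub along paths of
length `s` repairs this with at most `s n^{s+1}` extra edges. One more copy of every edge makes the
weighting positive everywhere, hence connected, and a loop at the hub pads the total to `l`. By
Euler's theorem the result is the edge count of a closed walk of length `l`, i.e. the window count
of a cyclic word of length `l`; as it dominates the rounded weights, whose total is at least
`l - (s+2) n^{s+1}`, the empirical measure of that word is within `2 (s+2) n^{s+1} / l` of `ψ`.
For `l < (s+1) n^{s+1}` the trivial bound `2` suffices.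
-/

lemma List.sum_count_eq_length {α : Type*} [Fintype α] [DecidableEq α] (L : List α) :
    ∑ a, L.count a = L.length := by
  simpa using Multiset.sum_count_eq_card (s := univ) (m := (L : Multiset α)) (by simp)

lemma List.card_filter_getElem_eq_count {α : Type*} [DecidableEq α] (L : List α) (a : α) :
    #{i : Fin L.length | L[i] = a} = L.count a := by
  conv_rhs => rw [← List.ofFn_getElem (xs := L)]
  rw [← Multiset.coe_count, ← Fin.univ_val_map, Multiset.count_map]
  simp [Finset.card, Finset.filter_val, eq_comm]

lemma empT_nonneg {n s l : ℕ} [NeZero l] (x : Fin l → Fin n) (e : Fin (s+1) → Fin n) :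
    0 ≤ empT s x e :=
  div_nonneg (sum_nonneg fun _ _ => by positivity) (Nat.cast_nonneg l)

lemma sum_empT {n s l : ℕ} [NeZero l] (x : Fin l → Fin n) : ∑ e, empT s x e = 1 := by
  simp only [empT, ← sum_div]
  rw [sum_comm]
  simp [NeZero.ne l]

lemma Finset.sum_natFloor_le_sum {ι : Type*} (S : Finset ι) {g : ι → ℝ} (hg : ∀ i ∈ S, 0 ≤ g i) :
    ∑ i ∈ S, (⌊g i⌋₊ : ℝ) ≤ ∑ i ∈ S, g i :=
  sum_le_sum fun i hi => Nat.floor_le (hg i hi)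

lemma Finset.sum_le_sum_natFloor_add_card {ι : Type*} (S : Finset ι) (g : ι → ℝ) :
    ∑ i ∈ S, g i ≤ ∑ i ∈ S, (⌊g i⌋₊ : ℝ) + #S := by
  rw [card_eq_sum_ones, Nat.cast_sum, ← sum_add_distrib]
  exact sum_le_sum fun i _ => by simpa using (Nat.lt_floor_add_one (g i)).le

lemma sum_abs_sub_le_two_mul {ι : Type*} [Fintype ι] {p q b : ι → ℝ} (hp : ∑ i, p i = 1)
    (hq : ∑ i, q i = 1) (hbp : b ≤ p) (hbq : b ≤ q) :
    ∑ i, |p i - q i| ≤ 2 * (1 - ∑ i, b i) :=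
  calc ∑ i, |p i - q i| ≤ ∑ i, ((p i - b i) + (q i - b i)) :=
        sum_le_sum fun i _ => abs_sub_le_iff.mpr ⟨by linarith [hbq i], by linarith [hbp i]⟩
    _ = 2 * (1 - ∑ i, b i) := by
        rw [sum_add_distrib, sum_sub_distrib, sum_sub_distrib, hp, hq]
        ring

namespace DeBruijn

/- A word `e : Fin (s+1) → Fin n` is read as an edge of the de Bruijn graph on `Fin s → Fin n`,
from `Fin.init e` to `Fin.tail e`; a function `c` on edges is a weighting of the edges. -/

variable {n s : ℕ}

section Degrees

variable {M : Type*} [AddCommMonoid M]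

def outDeg (c : (Fin (s+1) → Fin n) → M) (v : Fin s → Fin n) : M := ∑ j, c (Fin.snoc v j)

def inDeg (c : (Fin (s+1) → Fin n) → M) (v : Fin s → Fin n) : M := ∑ j, c (Fin.cons j v)

def IsBalanced (c : (Fin (s+1) → Fin n) → M) : Prop := ∀ v, outDeg c v = inDeg c v

lemma outDeg_eq_sum_filter (c : (Fin (s+1) → Fin n) → M) (v : Fin s → Fin n) :
    outDeg c v = ∑ e with Fin.init e = v, c e := by
  refine sum_nbij' (fun j => (Fin.snoc v j : Fin (s+1) → Fin n)) (fun e => e (Fin.last s))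
    (by simp) (by simp) (by simp) (fun e he => ?_) (by simp)
  simp only [mem_filter, mem_univ, true_and] at he
  rw [← he, Fin.snoc_init_self]

lemma inDeg_eq_sum_filter (c : (Fin (s+1) → Fin n) → M) (v : Fin s → Fin n) :
    inDeg c v = ∑ e with Fin.tail e = v, c e := by
  refine sum_nbij' (Fin.cons · v) (fun e => e 0) (by simp) (by simp) (by simp) (fun e he => ?_)
    (by simp)
  simp only [mem_filter, mem_univ, true_and] at he
  rw [← he, Fin.cons_self_tail]

lemma sum_outDeg (c : (Fin (s+1) → Fin n) → M) : ∑ v, outDeg c v = ∑ e, c e := by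
  simp_rw [outDeg_eq_sum_filter]
  exact sum_fiberwise _ _ _

lemma sum_inDeg (c : (Fin (s+1) → Fin n) → M) : ∑ v, inDeg c v = ∑ e, c e := by
  simp_rw [inDeg_eq_sum_filter]
  exact sum_fiberwise _ _ _

lemma outDeg_add (c d : (Fin (s+1) → Fin n) → M) (v : Fin s → Fin n) :
    outDeg (c + d) v = outDeg c v + outDeg d v :=
  sum_add_distrib

lemma inDeg_add (c d : (Fin (s+1) → Fin n) → M) (v : Fin s → Fin n) :
    inDeg (c + d) v = inDeg c v + inDeg d v :=
  sum_add_distrib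

lemma IsBalanced.add {c d : (Fin (s+1) → Fin n) → M} (hc : IsBalanced c) (hd : IsBalanced d) :
    IsBalanced (c + d) := fun v => by
  rw [outDeg_add, inDeg_add, hc v, hd v]

lemma IsBalanced.smul {R : Type*} [Monoid R] [DistribMulAction R M]
    {c : (Fin (s+1) → Fin n) → M} (hc : IsBalanced c) (k : R) : IsBalanced (k • c) := fun v => by
  simp only [outDeg, inDeg, Pi.smul_apply, ← smul_sum]
  exact congrArg (k • ·) (hc v)

lemma isBalanced_const (a : M) : IsBalanced (fun _ : Fin (s+1) → Fin n => a) := fun v => by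
  simp [outDeg, inDeg]

end Degrees

lemma _root_.IsStatT.isBalanced {ψ : (Fin (s+1) → Fin n) → ℝ} (h : IsStatT s ψ) :
    IsBalanced ψ :=
  match s, ψ, h with
  | 0, ψ, _ => fun _ => sum_congr rfl fun _ _ =>
    congrArg ψ (funext fun r => by rw [Fin.fin_one_eq_zero r]; rfl)
  | _ + 1, _, h => h.1

lemma outDeg_ite_eq (e : Fin (s+1) → Fin n) (v : Fin s → Fin n) :
    outDeg (fun e' => if e = e' then 1 else 0) v = if v = Fin.init e then 1 else 0 := by
  rw [outDeg_eq_sum_filter, sum_ite_eq]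
  simp [eq_comm]

lemma inDeg_ite_eq (e : Fin (s+1) → Fin n) (v : Fin s → Fin n) :
    inDeg (fun e' => if e = e' then 1 else 0) v = if v = Fin.tail e then 1 else 0 := by
  rw [inDeg_eq_sum_filter, sum_ite_eq]
  simp [eq_comm]

inductive Walk : (Fin s → Fin n) → (Fin s → Fin n) → List (Fin (s+1) → Fin n) → Prop
  | nil (v : Fin s → Fin n) : Walk v v []
  | cons {a b : Fin s → Fin n} {e : Fin (s+1) → Fin n} {L : List (Fin (s+1) → Fin n)} :
      Fin.init e = a → Walk (Fin.tail e) b L → Walk a b (e :: L)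

namespace Walk

variable {a b c : Fin s → Fin n} {L X Y : List (Fin (s+1) → Fin n)}

lemma append (hX : Walk a b X) (hY : Walk b c Y) : Walk a c (X ++ Y) := by
  induction hX with
  | nil => exact hY
  | cons he _ ih => exact .cons he (ih hY)

lemma concat (hL : Walk a b L) {e : Fin (s+1) → Fin n} (he : Fin.init e = b) :
    Walk a (Fin.tail e) (L ++ [e]) :=
  hL.append (.cons he (.nil _))

lemma of_append (h : Walk a c (X ++ Y)) : ∃ b, Walk a b X ∧ Walk b c Y := by
  induction X generalizing a with
  | nil => exact ⟨a, .nil a, h⟩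
  | cons e X ih =>
    obtain _ | ⟨he, h⟩ := h
    obtain ⟨b, hX, hY⟩ := ih h
    exact ⟨b, .cons he hX, hY⟩

lemma rotate (h : Walk a a L) {e : Fin (s+1) → Fin n} (he : e ∈ L) :
    ∃ L', Walk (Fin.init e) (Fin.init e) L' ∧ L'.Perm L := by
  obtain ⟨X, Y, rfl⟩ := List.append_of_mem he
  obtain ⟨b, hX, hY⟩ := h.of_append
  have hb : Fin.init e = b := by
    obtain _ | ⟨hb, -⟩ := hY
    exact hb
  subst hb
  exact ⟨(e :: Y) ++ X, hY.append hX, List.perm_append_comm⟩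

lemma tail_eq_or_exists_init_eq (h : Walk a b L) {e : Fin (s+1) → Fin n} (he : e ∈ L) :
    Fin.tail e = b ∨ ∃ f ∈ L, Fin.init f = Fin.tail e := by
  induction h with
  | nil => simp at he
  | cons _ hL ih =>
    rcases List.mem_cons.mp he with rfl | he
    · obtain _ | ⟨hf, -⟩ := hL
      · exact .inl rfl
      · exact .inr ⟨_, by simp, hf⟩
    · obtain hb | ⟨f, hf, hfe⟩ := ih he
      · exact .inl hb
      · exact .inr ⟨f, List.mem_cons_of_mem _ hf, hfe⟩

lemma mem_of_forall_tail_mem {S : Set (Fin s → Fin n)}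
    (hS : ∀ e : Fin (s+1) → Fin n, Fin.init e ∈ S → Fin.tail e ∈ S) (h : Walk a b L) (ha : a ∈ S) :
    b ∈ S := by
  induction h with
  | nil => exact ha
  | cons he _ ih => exact ih (hS _ (he ▸ ha))

lemma outDeg_count_add (h : Walk a b L) (v : Fin s → Fin n) :
    outDeg (L.count ·) v + (if v = b then 1 else 0) =
      inDeg (L.count ·) v + (if v = a then 1 else 0) := by
  induction h with
  | nil => simp [outDeg, inDeg]
  | @cons a b e L he _ ih =>
    have hcount : (fun e' => (e :: L).count e') =
        (L.count ·) + fun e' => if e = e' then 1 else 0 := by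
      ext e'
      simp [List.count_cons]
    rw [hcount, outDeg_add, inDeg_add, outDeg_ite_eq, inDeg_ite_eq, he]
    omega

lemma isBalanced_count (h : Walk a a L) : IsBalanced (L.count ·) := fun v => by
  simpa using h.outDeg_count_add v

lemma tail_getElem (h : Walk a b L) (i : ℕ) (hi : i < L.length) :
    Fin.tail L[i] = if hi' : i + 1 < L.length then Fin.init L[i + 1] else b := by
  induction h generalizing i with
  | nil => simp at hi
  | cons _ hL ih =>
    cases i with
    | zero =>
      obtain _ | ⟨hf, -⟩ := hL
      · simp
      · simp [hf]
    | succ i => simpa using ih i (by simpa using hi)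

lemma init_getElem_zero (h : Walk a b L) (hL : 0 < L.length) : Fin.init L[0] = a := by
  obtain _ | ⟨he, -⟩ := h
  · simp at hL
  · exact he

lemma tail_getElem_add_one (h : Walk a a L) [NeZero L.length] (t : Fin L.length) :
    Fin.tail L[t] = Fin.init L[t + 1] := by
  have ht : (t + 1).val = if t.val + 1 < L.length then t.val + 1 else 0 := by
    rw [Fin.val_add, Fin.val_one', Nat.add_mod_mod]
    split_ifs with h1
    · exact Nat.mod_eq_of_lt h1
    · rw [show t.val + 1 = L.length by omega, Nat.mod_self]
  simp only [Fin.getElem_fin, h.tail_getElem t t.isLt, ht]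
  split_ifs
  · rfl
  · exact (h.init_getElem_zero t.pos).symm

open Fin.NatCast in
lemma getElem_apply (h : Walk a a L) [NeZero L.length] (r : ℕ) (hr : r < s + 1)
    (t : Fin L.length) : L[t] ⟨r, hr⟩ = L[t + (r : Fin L.length)] 0 := by
  induction r generalizing t with
  | zero => rw [Nat.cast_zero, add_zero]; rfl
  | succ r ih =>
    have := congrFun (h.tail_getElem_add_one t) ⟨r, by omega⟩
    simp only [Fin.tail, Fin.init] at this
    rw [show (⟨r + 1, hr⟩ : Fin (s+1)) = Fin.succ ⟨r, by omega⟩ from rfl, this,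
      show (Fin.castSucc ⟨r, by omega⟩ : Fin (s+1)) = ⟨r, by omega⟩ from rfl, ih]
    rw [Nat.cast_succ, add_right_comm, add_assoc]

open Fin.NatCast in
/-- A closed walk of length `l` is the sequence of windows of a cyclic word of length `l`. -/
lemma exists_empT_eq (h : Walk a a L) {l : ℕ} [NeZero l] (hl : L.length = l) :
    ∃ x : Fin l → Fin n, ∀ e, empT s x e = L.count e / l := by
  subst hl
  refine ⟨fun t => L[t] 0, fun e => ?_⟩
  have hwin : ∀ t : Fin L.length,
      (fun r : Fin (s+1) => L[t + (r.val : Fin L.length)] 0) = L[t] :=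
    fun t => funext fun r => (h.getElem_apply r r.isLt t).symm
  simp only [empT, hwin, sum_boole, List.card_filter_getElem_eq_count]

end Walk

lemma outDeg_sum_count_add {ι : Type*} [Fintype ι] {a b : ι → Fin s → Fin n}
    {P : ι → List (Fin (s+1) → Fin n)} (hP : ∀ i, Walk (a i) (b i) (P i)) (w : ι → ℕ)
    (v : Fin s → Fin n) :
    outDeg (fun e => ∑ i, w i * (P i).count e) v + ∑ i, w i * (if v = b i then 1 else 0) =
      inDeg (fun e => ∑ i, w i * (P i).count e) v + ∑ i, w i * (if v = a i then 1 else 0) := by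
  have hout : outDeg (fun e => ∑ i, w i * (P i).count e) v =
      ∑ i, w i * outDeg ((P i).count ·) v := by
    simp only [outDeg, mul_sum]
    exact sum_comm
  have hin : inDeg (fun e => ∑ i, w i * (P i).count e) v =
      ∑ i, w i * inDeg ((P i).count ·) v := by
    simp only [inDeg, mul_sum]
    exact sum_comm
  rw [hout, hin, ← sum_add_distrib, ← sum_add_distrib]
  exact sum_congr rfl fun i _ => by rw [← mul_add, ← mul_add, (hP i).outDeg_count_add v]

lemma exists_walk_of_shift (k : ℕ) (hk : k ≤ s) (a b : Fin s → Fin n)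
    (hab : ∀ r : Fin s, (h : r + k < s) → b r = a ⟨r + k, h⟩) :
    ∃ L, Walk a b L ∧ L.length = k := by
  induction k generalizing a with
  | zero => exact ⟨[], by convert Walk.nil a; ext r; simp [hab r r.isLt], rfl⟩
  | succ k ih =>
    set e : Fin (s+1) → Fin n := Fin.snoc a (b ⟨s - (k + 1), by omega⟩)
    obtain ⟨L, hL, hlen⟩ := ih (by omega) (Fin.tail e) fun r hr => by
      by_cases hr' : r + k + 1 < s
      · have hr'' : r.val + (k + 1) < s := by omega
        simp [e, Fin.tail, Fin.snoc, hr'', ← hab r hr'', add_assoc]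
      · simp only [e, Fin.tail, Fin.snoc, Fin.val_succ, dif_neg hr']
        exact congrArg b (Fin.ext (by simp; omega))
    exact ⟨e :: L, .cons (Fin.init_snoc _ _) hL, by simp [hlen]⟩

lemma exists_walk (a b : Fin s → Fin n) : ∃ L, Walk a b L ∧ L.length = s :=
  exists_walk_of_shift s le_rfl a b fun r h => absurd h (by omega)

lemma exists_walk_concat_le {c : (Fin (s+1) → Fin n) → ℕ} {a b : Fin s → Fin n}
    {L : List (Fin (s+1) → Fin n)} (hL : Walk a b L) (hLc : ∀ e, L.count e ≤ c e)
    (hb : outDeg (L.count ·) b < outDeg c b) :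
    ∃ e, Walk a (Fin.tail e) (L ++ [e]) ∧ ∀ e', (L ++ [e]).count e' ≤ c e' := by
  obtain ⟨j, -, hj⟩ := exists_lt_of_sum_lt hb
  refine ⟨Fin.snoc b j, hL.concat (Fin.init_snoc _ _), fun e' => ?_⟩
  rw [List.count_append, List.count_singleton]
  by_cases h : Fin.snoc b j = e'
  · subst h
    simpa using hj
  · simpa [h] using hLc e'

/-- Saturation spreads from `b` along every edge, and the de Bruijn graph is connected. -/
lemma Walk.count_eq_of_saturated {c : (Fin (s+1) → Fin n) → ℕ} {b : Fin s → Fin n}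
    {L : List (Fin (s+1) → Fin n)} (hL : Walk b b L) (hpos : ∀ e, 0 < c e)
    (hsat : ∀ e, (Fin.init e = b ∨ ∃ f ∈ L, Fin.init f = Fin.init e) → L.count e = c e) :
    ∀ e, L.count e = c e := by
  set T : Set (Fin s → Fin n) := {u | u = b ∨ ∃ f ∈ L, Fin.init f = u}
  have hT : ∀ e : Fin (s+1) → Fin n, Fin.init e ∈ T → Fin.tail e ∈ T := fun e he =>
    hL.tail_eq_or_exists_init_eq (List.count_pos_iff.mp ((hsat e he).symm ▸ hpos e))
  intro e
  obtain ⟨P, hP, -⟩ := exists_walk b (Fin.init e)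
  exact hsat e (hP.mem_of_forall_tail_mem hT (.inl rfl))

/-- Euler's theorem for the de Bruijn graph; positivity of `c` on every edge stands in for
connectivity of its support. -/
theorem exists_closed_walk_count_eq [NeZero n] {c : (Fin (s+1) → Fin n) → ℕ} (hbal : IsBalanced c)
    (hpos : ∀ e, 0 < c e) : ∃ v L, Walk v v L ∧ ∀ e, L.count e = c e := by
  set S : Set ℕ := {k | ∃ a b L, Walk a b L ∧ (∀ e, L.count e ≤ c e) ∧ L.length = k}
  have hbdd : BddAbove S := ⟨∑ e, c e, by
    rintro _ ⟨a, b, L, -, hLc, rfl⟩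
    rw [← List.sum_count_eq_length]
    exact sum_le_sum fun e _ => hLc e⟩
  obtain ⟨a, b, L, hL, hLc, hlen⟩ : sSup S ∈ S :=
    Nat.sSup_mem ⟨0, 0, 0, [], .nil 0, by simp, rfl⟩ hbdd
  -- a longest walk cannot be extended at its end
  have hsat : ∀ {a' b' L'}, Walk a' b' L' → (∀ e, L'.count e ≤ c e) → L'.length = L.length →
      outDeg c b' ≤ outDeg (L'.count ·) b' := fun {a' b' L'} hL' hL'c hlen' => by
    by_contra! hlt
    obtain ⟨e, he, hec⟩ := exists_walk_concat_le hL' hL'c hlt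
    have : L.length + 1 ≤ sSup S := le_csSup hbdd ⟨_, _, _, he, hec, by simp [hlen']⟩
    omega
  -- an open walk leaves its end once less often than it enters it
  have hclosed : b = a := by
    by_contra hba
    have hdeg := hL.outDeg_count_add b
    rw [if_pos rfl, if_neg hba] at hdeg
    have hin : inDeg (L.count ·) b ≤ inDeg c b := sum_le_sum fun j _ => hLc _
    have hout := hsat hL hLc rfl
    have := hbal b
    omega
  subst hclosed
  refine ⟨b, L, hL, hL.count_eq_of_saturated hpos fun e he => ?_⟩
  have hout : outDeg c (Fin.init e) ≤ outDeg (L.count ·) (Fin.init e) := by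
    rcases he with he | ⟨f, hf, hfe⟩
    · rw [he]
      exact hsat hL hLc rfl
    · obtain ⟨L', hL', hperm⟩ := hL.rotate hf
      rw [← hfe]
      simpa only [hperm.count_eq] using
        hsat hL' (fun e => hperm.count_eq e ▸ hLc e) hperm.length_eq
  rw [← Fin.snoc_init_self e]
  exact (sum_eq_sum_iff_of_le fun j _ => hLc _).mp
    (le_antisymm (sum_le_sum fun j _ => hLc _) hout) _ (mem_univ _)

theorem exists_empT_eq_of_isBalanced [NeZero n] {c : (Fin (s+1) → Fin n) → ℕ}
    (hbal : IsBalanced c) (hpos : ∀ e, 0 < c e) {l : ℕ} [NeZero l] (hl : ∑ e, c e = l) :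
    ∃ x : Fin l → Fin n, ∀ e, empT s x e = c e / l := by
  obtain ⟨v, L, hL, hLc⟩ := exists_closed_walk_count_eq hbal hpos
  obtain ⟨x, hx⟩ := hL.exists_empT_eq (l := l) (by simp [← List.sum_count_eq_length, hLc, hl])
  exact ⟨x, fun e => by rw [hx, hLc]⟩

/-- Balancing by routing every vertex's excess through the hub `h` along paths of length `s`. -/
theorem exists_isBalanced_add (f : (Fin (s+1) → Fin n) → ℕ) (h : Fin s → Fin n) :
    ∃ r : (Fin (s+1) → Fin n) → ℕ,
      IsBalanced (f + r) ∧ ∑ e, r e = s * ∑ v, (outDeg f v).dist (inDeg f v) := by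
  choose P hP hPlen using fun u => exists_walk u h
  choose Q hQ hQlen using fun u => exists_walk h u
  set excess : (Fin s → Fin n) → ℕ := fun u => inDeg f u - outDeg f u
  set deficit : (Fin s → Fin n) → ℕ := fun u => outDeg f u - inDeg f u
  have hexcess : ∑ u, excess u = ∑ u, deficit u := by
    have : ∑ u, (excess u + outDeg f u) = ∑ u, (deficit u + inDeg f u) :=
      sum_congr rfl fun u _ => by simp only [excess, deficit]; omega
    rw [sum_add_distrib, sum_add_distrib, sum_outDeg, sum_inDeg] at this
    omega
  refine ⟨(fun e => ∑ u, excess u * (P u).count e) + (fun e => ∑ u, deficit u * (Q u).count e),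
    fun v => ?_, ?_⟩
  · have hPv := outDeg_sum_count_add hP excess v
    have hQv := outDeg_sum_count_add hQ deficit v
    have hv' : excess v + outDeg f v = deficit v + inDeg f v := by
      simp only [excess, deficit]
      omega
    rw [outDeg_add, outDeg_add, inDeg_add, inDeg_add]
    by_cases hv : v = h
    · subst hv
      simp only [if_true, mul_one, mul_ite, mul_zero, sum_ite_eq, mem_univ] at hPv hQv
      omega
    · simp only [hv, if_false, mul_zero, sum_const_zero, add_zero, mul_ite, mul_one, sum_ite_eq,
        mem_univ, if_true] at hPv hQv
      omega
  · have hP' : ∑ e, ∑ u, excess u * (P u).count e = ∑ u, excess u * s := by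
      rw [sum_comm]
      simp only [← mul_sum, List.sum_count_eq_length, hPlen]
    have hQ' : ∑ e, ∑ u, deficit u * (Q u).count e = ∑ u, deficit u * s := by
      rw [sum_comm]
      simp only [← mul_sum, List.sum_count_eq_length, hQlen]
    simp only [Pi.add_apply]
    rw [sum_add_distrib, hP', hQ', ← sum_add_distrib, mul_sum]
    refine sum_congr rfl fun u _ => ?_
    simp only [Nat.dist, excess, deficit]
    ring

lemma dist_outDeg_inDeg_natFloor_le {ψ : (Fin (s+1) → Fin n) → ℝ} (hψ : ∀ e, 0 ≤ ψ e)
    (hbal : IsBalanced ψ) (v : Fin s → Fin n) :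
    (outDeg (fun e => ⌊ψ e⌋₊) v).dist (inDeg (fun e => ⌊ψ e⌋₊) v) ≤ n := by
  set f : (Fin (s+1) → Fin n) → ℕ := fun e => ⌊ψ e⌋₊
  have hout : ((outDeg f v : ℕ) : ℝ) ≤ outDeg ψ v ∧ outDeg ψ v ≤ outDeg f v + n := by
    simp only [outDeg, f, Nat.cast_sum]
    exact ⟨sum_natFloor_le_sum _ fun _ _ => hψ _,
      by simpa using sum_le_sum_natFloor_add_card univ fun j => ψ (Fin.snoc v j)⟩
  have hin : ((inDeg f v : ℕ) : ℝ) ≤ inDeg ψ v ∧ inDeg ψ v ≤ inDeg f v + n := by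
    simp only [inDeg, f, Nat.cast_sum]
    exact ⟨sum_natFloor_le_sum _ fun _ _ => hψ _,
      by simpa using sum_le_sum_natFloor_add_card univ fun j => ψ (Fin.cons j v)⟩
  have h₁ : outDeg f v ≤ inDeg f v + n := by
    exact_mod_cast (hout.1.trans (hbal v).le).trans hin.2
  have h₂ : inDeg f v ≤ outDeg f v + n := by
    exact_mod_cast (hin.1.trans (hbal v).ge).trans hout.2
  simp only [Nat.dist]
  omega

lemma exists_isBalanced_pos_of_le [NeZero n] {g : (Fin (s+1) → Fin n) → ℕ} (hg : IsBalanced g)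
    {l : ℕ} (hl : ∑ e, g e + n ^ (s + 1) ≤ l) :
    ∃ c, IsBalanced c ∧ (∀ e, 0 < c e) ∧ ∑ e, c e = l ∧ g ≤ c := by
  have hloop : Walk (0 : Fin s → Fin n) 0 [0] := .cons rfl (.nil _)
  have hloop_len : ∑ e, ([0] : List (Fin (s+1) → Fin n)).count e = 1 := by
    rw [List.sum_count_eq_length]
    rfl
  set p := l - (∑ e, g e + n ^ (s + 1))
  refine ⟨g + 1 + p • ([0].count ·),
    (hg.add (isBalanced_const 1)).add (hloop.isBalanced_count.smul p), fun e => by simp, ?_,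
    fun e => by simp only [Pi.add_apply]; omega⟩
  simp only [Pi.add_apply, Pi.one_apply, Pi.smul_apply, smul_eq_mul, sum_add_distrib, ← mul_sum,
    hloop_len, sum_const, card_univ, Fintype.card_fun, Fintype.card_fin, mul_one]
  omega

theorem exists_isBalanced_approx [NeZero n] {ψ : (Fin (s+1) → Fin n) → ℝ} (hψ : IsProbF ψ)
    (hbal : IsBalanced ψ) {l : ℕ} (hl : (s + 1) * n ^ (s + 1) ≤ l) :
    ∃ c f : (Fin (s+1) → Fin n) → ℕ, IsBalanced c ∧ (∀ e, 0 < c e) ∧ ∑ e, c e = l ∧ f ≤ c ∧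
      (∀ e, (f e : ℝ) ≤ l * ψ e) ∧ l ≤ ∑ e, f e + (s + 2) * n ^ (s + 1) := by
  set N := n ^ (s + 1)
  set l' := l - (s + 1) * N
  set ψ' := (l' : ℝ) • ψ
  have hψ' : ∀ e, 0 ≤ ψ' e := fun e => mul_nonneg (Nat.cast_nonneg _) (hψ.1 e)
  have hsumψ' : ∑ e, ψ' e = l' := by simp [ψ', ← mul_sum, hψ.2]
  set f : (Fin (s+1) → Fin n) → ℕ := fun e => ⌊ψ' e⌋₊
  have hf_le : ∑ e, f e ≤ l' := by
    have := sum_natFloor_le_sum univ fun e _ => hψ' e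
    rw [hsumψ'] at this
    exact_mod_cast this
  have hf_ge : l' ≤ ∑ e, f e + N := by
    have := sum_le_sum_natFloor_add_card univ ψ'
    rw [hsumψ', card_univ, Fintype.card_fun, Fintype.card_fin, Fintype.card_fin] at this
    exact_mod_cast this
  obtain ⟨r, hbal_fr, hr⟩ := exists_isBalanced_add f 0
  have hr_le : ∑ e, r e ≤ s * N := by
    rw [hr]
    refine Nat.mul_le_mul_left _ ((sum_le_sum fun v _ =>
      dist_outDeg_inDeg_natFloor_le hψ' (hbal.smul _) v).trans ?_)
    simp [N, pow_succ]
  have hsN : (s + 1) * N = s * N + N := by ring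
  obtain ⟨c, hc, hpos, hsum, hfrc⟩ := exists_isBalanced_pos_of_le hbal_fr (l := l) (by
    simp only [Pi.add_apply, sum_add_distrib]
    omega)
  refine ⟨c, f, hc, hpos, hsum, fun e => le_trans (by simp) (hfrc e), fun e => ?_, ?_⟩
  · exact (Nat.floor_le (hψ' e)).trans (mul_le_mul_of_nonneg_right (by simp [l']) (hψ.1 e))
  · have : (s + 2) * N = (s + 1) * N + N := by ring
    omega

theorem exists_mem_Eset_sum_abs_sub_le [NeZero n] {ψ : (Fin (s+1) → Fin n) → ℝ}
    (hψ : IsProbF ψ) (hbal : IsBalanced ψ) (m : ℕ) :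
    ∃ ν ∈ Eset n s m, ∑ i, |ψ i - ν i| ≤ 2 * ((s:ℝ)+3) * (n:ℝ)^(s+1) / ((m:ℝ)+1) := by
  suffices h : ∃ (x : Fin (m+1) → Fin n) (b : (Fin (s+1) → Fin n) → ℝ), b ≤ ψ ∧ b ≤ empT s x ∧
      ((m:ℝ) + 1) * (1 - ∑ e, b e) ≤ ((s:ℝ) + 3) * (n:ℝ) ^ (s + 1) by
    obtain ⟨x, b, hbψ, hbx, hb⟩ := h
    refine ⟨empT s x, by simp only [Eset]; exact mem_image_of_mem _ (mem_univ x), ?_⟩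
    calc ∑ i, |ψ i - empT s x i| ≤ 2 * (1 - ∑ e, b e) :=
          sum_abs_sub_le_two_mul hψ.2 (sum_empT x) hbψ hbx
      _ ≤ _ := by
        rw [mul_assoc, mul_div_assoc]
        gcongr
        rw [le_div_iff₀ (by positivity), mul_comm]
        exact hb
  by_cases hl : (s + 1) * n ^ (s + 1) ≤ m + 1
  · obtain ⟨c, f, hbal, hpos, hsum, hfc, hfψ, hlf⟩ := exists_isBalanced_approx hψ hbal hl
    obtain ⟨x, hx⟩ := exists_empT_eq_of_isBalanced hbal hpos hsum
    refine ⟨x, fun e => f e / ((m : ℝ) + 1), fun e => ?_, fun e => ?_, ?_⟩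
    · rw [div_le_iff₀ (by positivity), mul_comm]
      exact_mod_cast hfψ e
    · rw [hx, Nat.cast_succ]
      dsimp only
      gcongr
      exact_mod_cast hfc e
    · rw [← sum_div, mul_sub, mul_one, mul_div_cancel₀ _ (by positivity)]
      have : ((m + 1 : ℕ) : ℝ) ≤ ∑ e, (f e : ℝ) + (s + 2) * n ^ (s + 1) := by exact_mod_cast hlf
      push_cast at this
      nlinarith [pow_nonneg (Nat.cast_nonneg (α := ℝ) n) (s + 1)]
  · refine ⟨0, 0, hψ.1, empT_nonneg 0, ?_⟩
    push Not at hl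
    simp only [Pi.zero_apply, sum_const_zero, sub_zero, mul_one]
    have : ((m + 1 : ℕ) : ℝ) ≤ ((s + 1) * n ^ (s + 1) : ℕ) := by exact_mod_cast hl.le
    push_cast at this
    nlinarith [pow_nonneg (Nat.cast_nonneg (α := ℝ) n) (s + 1)]

end DeBruijn

/-- For every stationary distribution `ψ ∈ M_s(A^{s+1})` and every
integer `l ≥ 1` (here `l = m+1`), the minimum over `ν ∈ E(l,n,s+1)` of the ℓ¹-distance
`‖ψ − ν‖₁` is at most `2(s+3) n^{s+1} / l`; consequently every stationary distribution
on `A^{s+1}` is the limit in total variation of a sequence of empirical measures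
`ν_l ∈ E(l,n,s+1)`. -/
theorem stmt7 {n s : ℕ} (ψ : (Fin (s+1) → Fin n) → ℝ)
    (hψprob : IsProbF ψ) (hψstat : IsStatT s ψ) :
    (∀ m : ℕ, ∃ ν ∈ Eset n s m,
      ∑ i, |ψ i - ν i| ≤ 2 * ((s:ℝ)+3) * (n:ℝ)^(s+1) / ((m:ℝ)+1)) ∧
    ∃ νseq : (m : ℕ) → (Fin (s+1) → Fin n) → ℝ,
      (∀ m, νseq m ∈ Eset n s m) ∧
      Filter.Tendsto (fun m => ∑ i, |ψ i - νseq m i|) Filter.atTop (nhds 0) := by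
  have : NeZero n := ⟨fun hn => by
    have h := hψprob.2
    subst hn
    simp at h⟩
  have hbound := DeBruijn.exists_mem_Eset_sum_abs_sub_le hψprob hψstat.isBalanced
  refine ⟨hbound, ?_⟩
  choose ν hν hνψ using hbound
  refine ⟨ν, hν, squeeze_zero (fun m => sum_nonneg fun i _ => abs_nonneg _) hνψ ?_⟩
  have h := (tendsto_one_div_add_atTop_nhds_zero_nat (𝕜 := ℝ)).const_mul
    (2 * ((s:ℝ)+3) * (n:ℝ)^(s+1))
  rw [mul_zero] at h
  exact h.congr fun m => mul_one_div _ _
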